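/- arXiv:2007.13095 — 3 statements merged into one kernel-verified Lean document; each statement's English description precedes it below -/
import Mathlib

section
/- Let G be a connected graph on vertex set {1,...,n} with n ≥ 2, Φ = (F_1,...,F_n) with |V(F_i)| ≥ 2 for all i, and let D be a minimum dominating set (or minimum total dominating set) of G[Φ]. Then |D ∩ V(F_i)| ≤ 2 for all i ∈ [n]. -/
open scoped Classical

/-- A dominating set: every vertex is in `D` or adjacent to a vertex of `D`. -/
def isDominatingSet {V : Type*} (H : SimpleGraph V) (D : Finset V) : Prop :=
  ∀ v : V, v ∈ D ∨ ∃ u ∈ D, H.Adj u v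

/-- A total dominating set: every vertex has a neighbor in `D`. -/
def isTotalDominatingSet {V : Type*} (H : SimpleGraph V) (D : Finset V) : Prop :=
  ∀ v : V, ∃ u ∈ D, H.Adj u v

def isMinimalDominatingSet {V : Type*} (H : SimpleGraph V) (D : Finset V) : Prop :=
  isDominatingSet H D ∧ ∀ D' : Finset V, D' ⊂ D → ¬ isDominatingSet H D'

def isMinimalTotalDominatingSet {V : Type*} (H : SimpleGraph V) (D : Finset V) : Prop :=
  isTotalDominatingSet H D ∧ ∀ D' : Finset V, D' ⊂ D → ¬ isTotalDominatingSet H D'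

noncomputable def domNum {V : Type*} (H : SimpleGraph V) : ℕ :=
  sInf {k | ∃ D : Finset V, isDominatingSet H D ∧ D.card = k}

noncomputable def totalDomNum {V : Type*} (H : SimpleGraph V) : ℕ :=
  sInf {k | ∃ D : Finset V, isTotalDominatingSet H D ∧ D.card = k}

noncomputable def upperDomNum {V : Type*} (H : SimpleGraph V) : ℕ :=
  sSup {k | ∃ D : Finset V, isMinimalDominatingSet H D ∧ D.card = k}

noncomputable def upperTotalDomNum {V : Type*} (H : SimpleGraph V) : ℕ :=
  sSup {k | ∃ D : Finset V, isMinimalTotalDominatingSet H D ∧ D.card = k}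

/-- Well (γ-)dominated: all minimal dominating sets have the same size. -/
def WellDominated {V : Type*} (H : SimpleGraph V) : Prop :=
  ∀ D₁ D₂ : Finset V, isMinimalDominatingSet H D₁ → isMinimalDominatingSet H D₂ →
    D₁.card = D₂.card

/-- Well γ_t-dominated: all minimal total dominating sets have the same size. -/
def WellTotalDominated {V : Type*} (H : SimpleGraph V) : Prop :=
  ∀ D₁ D₂ : Finset V, isMinimalTotalDominatingSet H D₁ → isMinimalTotalDominatingSet H D₂ →
    D₁.card = D₂.card

/-- Restrained dominating set: dominating and every vertex outside `D` has a
neighbor outside `D`. -/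
def isRestrainedDominatingSet {V : Type*} (H : SimpleGraph V) (D : Finset V) : Prop :=
  isDominatingSet H D ∧ ∀ v ∉ D, ∃ u ∉ D, H.Adj u v

/-- Outer-connected dominating set: dominating and the subgraph induced by the
complement of `D` is connected. -/
def isOuterConnectedDominatingSet {V : Type*} (H : SimpleGraph V) (D : Finset V) : Prop :=
  isDominatingSet H D ∧ (H.induce ((↑D : Set V)ᶜ)).Connected

def isTotalRestrainedDominatingSet {V : Type*} (H : SimpleGraph V) (D : Finset V) : Prop :=
  isTotalDominatingSet H D ∧ ∀ v ∉ D, ∃ u ∉ D, H.Adj u v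

def isTotalOuterConnectedDominatingSet {V : Type*} (H : SimpleGraph V) (D : Finset V) : Prop :=
  isTotalDominatingSet H D ∧ (H.induce ((↑D : Set V)ᶜ)).Connected

noncomputable def restrainedDomNum {V : Type*} (H : SimpleGraph V) : ℕ :=
  sInf {k | ∃ D : Finset V, isRestrainedDominatingSet H D ∧ D.card = k}

noncomputable def ocDomNum {V : Type*} (H : SimpleGraph V) : ℕ :=
  sInf {k | ∃ D : Finset V, isOuterConnectedDominatingSet H D ∧ D.card = k}

noncomputable def totalRestrainedDomNum {V : Type*} (H : SimpleGraph V) : ℕ :=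
  sInf {k | ∃ D : Finset V, isTotalRestrainedDominatingSet H D ∧ D.card = k}

noncomputable def totalOcDomNum {V : Type*} (H : SimpleGraph V) : ℕ :=
  sInf {k | ∃ D : Finset V, isTotalOuterConnectedDominatingSet H D ∧ D.card = k}

/-- Paired dominating set: dominating and the induced subgraph on `D` has a
perfect matching. -/
def isPairedDominatingSet {V : Type*} (H : SimpleGraph V) (D : Finset V) : Prop :=
  isDominatingSet H D ∧
    ∃ M : SimpleGraph.Subgraph (H.induce (↑D : Set V)), M.IsPerfectMatching

noncomputable def pairedDomNum {V : Type*} (H : SimpleGraph V) : ℕ :=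
  sInf {k | ∃ D : Finset V, isPairedDominatingSet H D ∧ D.card = k}

def isIndependentSet {V : Type*} (H : SimpleGraph V) (D : Finset V) : Prop :=
  ∀ u ∈ D, ∀ v ∈ D, ¬ H.Adj u v

def isMaximalIndependentSet {V : Type*} (H : SimpleGraph V) (D : Finset V) : Prop :=
  isIndependentSet H D ∧ ∀ D' : Finset V, D ⊂ D' → ¬ isIndependentSet H D'

/-- The independent domination number `i(H)`. -/
noncomputable def indepDomNum {V : Type*} (H : SimpleGraph V) : ℕ :=
  sInf {k | ∃ D : Finset V, isMaximalIndependentSet H D ∧ D.card = k}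

/-- The independence number `β₀(H)`. -/
noncomputable def indepNum {V : Type*} (H : SimpleGraph V) : ℕ :=
  sSup {k | ∃ D : Finset V, isIndependentSet H D ∧ D.card = k}

/-- An efficient dominating set: every vertex is dominated by exactly one
member of `D`. -/
def isEfficientDominatingSet {V : Type*} (H : SimpleGraph V) (D : Finset V) : Prop :=
  ∀ v : V, ∃! u : V, u ∈ D ∧ (u = v ∨ H.Adj u v)

/-- The generalized lexicographic product `G[Φ]` of a graph `G` on `Fin n` and a
family `Φ = (F 0, …, F (n-1))` of pairwise disjoint graphs: the `F i` are induced
subgraphs, and vertices in distinct `F i`, `F j` are adjacent iff `i j ∈ E(G)`. -/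
def GLP {n : ℕ} (G : SimpleGraph (Fin n)) {V : Fin n → Type*}
    (F : ∀ i, SimpleGraph (V i)) : SimpleGraph (Σ i, V i) where
  Adj x y := (x.1 ≠ y.1 ∧ G.Adj x.1 y.1) ∨ ∃ h : x.1 = y.1, (F y.1).Adj (h ▸ x.2) y.2
  symm := by
    constructor
    rintro ⟨i, a⟩ ⟨j, b⟩ (⟨hne, hadj⟩ | ⟨h, hadj⟩)
    · exact Or.inl ⟨fun hh => hne hh.symm, hadj.symm⟩
    · dsimp only at h
      subst h
      exact Or.inr ⟨rfl, hadj.symm⟩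
  loopless := by
    constructor
    rintro ⟨i, a⟩ (⟨hne, _⟩ | ⟨h, hadj⟩)
    · exact hne rfl
    · exact (F i).irrefl hadj

/-- The number of vertices of `D ∩ V(F i)`. -/
noncomputable def layerCount {n : ℕ} {V : Fin n → Type*} [∀ i, Fintype (V i)]
    (D : Finset (Σ i, V i)) (i : Fin n) : ℕ :=
  (D.filter (fun x => x.1 = i)).card

/-!
If a layer `V(F i)` contained three vertices of `D`, replace the whole layer by a single vertex
`(i, u)` together with a vertex `(j, w)` of a layer adjacent to it in `G` (which exists since `G` is
connected with at least two vertices). The vertex `(j, w)` dominates all of `V(F i)`, and `(i, u)`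
dominates every vertex outside `V(F i)` that the old layer dominated, so the result is a smaller
(total) dominating set.
-/

namespace GLP

variable {n : ℕ} {G : SimpleGraph (Fin n)} {V : Fin n → Type*} {F : ∀ i, SimpleGraph (V i)}

theorem adj_of_adj_fst {x y : Σ i, V i} (h : G.Adj x.1 y.1) : (GLP G F).Adj x y :=
  Or.inl ⟨h.ne, h⟩

theorem adj_fst_of_adj_of_ne {x y : Σ i, V i} (h : (GLP G F).Adj x y) (hne : x.1 ≠ y.1) :
    G.Adj x.1 y.1 := by
  rcases h with ⟨-, h⟩ | ⟨h, -⟩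
  · exact h
  · exact absurd h hne

end GLP

section ReplaceLayer

variable {n : ℕ} {V : Fin n → Type*}

noncomputable def replaceLayer (D : Finset (Σ i, V i)) (i : Fin n) (x y : Σ i, V i) :
    Finset (Σ i, V i) :=
  insert x (insert y (D.filter fun z => z.1 ≠ i))

theorem mem_replaceLayer_of_mem {D : Finset (Σ i, V i)} {i : Fin n} {x y z : Σ i, V i}
    (hz : z ∈ D) (hzi : z.1 ≠ i) : z ∈ replaceLayer D i x y :=
  Finset.mem_insert_of_mem (Finset.mem_insert_of_mem (Finset.mem_filter.2 ⟨hz, hzi⟩))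

theorem right_mem_replaceLayer {D : Finset (Σ i, V i)} {i : Fin n} {x y : Σ i, V i} :
    y ∈ replaceLayer D i x y :=
  Finset.mem_insert_of_mem (Finset.mem_insert_self _ _)

theorem card_replaceLayer_add_layerCount_le [∀ i, Fintype (V i)] (D : Finset (Σ i, V i))
    (i : Fin n) (x y : Σ i, V i) : (replaceLayer D i x y).card + layerCount D i ≤ D.card + 2 := by
  have hsplit : (D.filter fun z => z.1 = i).card + (D.filter fun z => z.1 ≠ i).card = D.card :=
    Finset.card_filter_add_card_filter_not _
  have hx := Finset.card_insert_le x (insert y (D.filter fun z => z.1 ≠ i))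
  have hy := Finset.card_insert_le y (D.filter fun z => z.1 ≠ i)
  unfold replaceLayer layerCount
  omega

variable {G : SimpleGraph (Fin n)} {F : ∀ i, SimpleGraph (V i)} {D : Finset (Σ i, V i)}
  {i j : Fin n} {x y : Σ i, V i}

theorem exists_adj_mem_replaceLayer (hij : G.Adj i j) (hx : x.1 = i) (hy : y.1 = j)
    {u v : Σ i, V i} (hu : u ∈ D) (huv : (GLP G F).Adj u v) :
    ∃ u' ∈ replaceLayer D i x y, (GLP G F).Adj u' v := by
  by_cases hui : u.1 = i
  · by_cases hvi : v.1 = i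
    · exact ⟨y, right_mem_replaceLayer, GLP.adj_of_adj_fst (hy ▸ hvi ▸ hij.symm)⟩
    · have huv' := GLP.adj_fst_of_adj_of_ne huv (hui ▸ Ne.symm hvi)
      exact ⟨x, Finset.mem_insert_self _ _, GLP.adj_of_adj_fst (hx.trans hui.symm ▸ huv')⟩
  · exact ⟨u, mem_replaceLayer_of_mem hu hui, huv⟩

theorem isDominatingSet.replaceLayer (hD : isDominatingSet (GLP G F) D) (hij : G.Adj i j)
    (hx : x.1 = i) (hy : y.1 = j) : isDominatingSet (GLP G F) (replaceLayer D i x y) := by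
  intro v
  rcases hD v with hv | ⟨u, hu, huv⟩
  · by_cases hvi : v.1 = i
    · exact Or.inr ⟨y, right_mem_replaceLayer, GLP.adj_of_adj_fst (hy ▸ hvi ▸ hij.symm)⟩
    · exact Or.inl (mem_replaceLayer_of_mem hv hvi)
  · exact Or.inr (exists_adj_mem_replaceLayer hij hx hy hu huv)

theorem isTotalDominatingSet.replaceLayer (hD : isTotalDominatingSet (GLP G F) D)
    (hij : G.Adj i j) (hx : x.1 = i) (hy : y.1 = j) :
    isTotalDominatingSet (GLP G F) (replaceLayer D i x y) := fun v =>
  let ⟨_, hu, huv⟩ := hD v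
  exists_adj_mem_replaceLayer hij hx hy hu huv

end ReplaceLayer

theorem domNum_le_card {W : Type*} {H : SimpleGraph W} {D : Finset W}
    (hD : isDominatingSet H D) : domNum H ≤ D.card :=
  Nat.sInf_le ⟨D, hD, rfl⟩

theorem totalDomNum_le_card {W : Type*} {H : SimpleGraph W} {D : Finset W}
    (hD : isTotalDominatingSet H D) : totalDomNum H ≤ D.card :=
  Nat.sInf_le ⟨D, hD, rfl⟩

/-- If `|V(F i)| ≥ 2` for all `i` and `D` is a minimum dominating set or a
minimum total dominating set of `G[Φ]`, then `|D ∩ V(F i)| ≤ 2` for all `i`. -/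
theorem stmt_6 {n : ℕ} (hn : 2 ≤ n) (G : SimpleGraph (Fin n)) (hG : G.Connected)
    (V : Fin n → Type) [∀ i, Fintype (V i)] (F : ∀ i, SimpleGraph (V i))
    (hV : ∀ i, 2 ≤ Fintype.card (V i)) (D : Finset (Σ i, V i))
    (hD : (isDominatingSet (GLP G F) D ∧ D.card = domNum (GLP G F)) ∨
      (isTotalDominatingSet (GLP G F) D ∧ D.card = totalDomNum (GLP G F))) :
    ∀ i, layerCount D i ≤ 2 := by
  intro i
  by_contra! hi
  have : Nontrivial (Fin n) := Fin.nontrivial_iff_two_le.2 hn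
  obtain ⟨j, hij⟩ := hG.preconnected.exists_adj_of_nontrivial i
  have hne : ∀ k, Nonempty (V k) := fun k => Fintype.card_pos_iff.1 (by linarith [hV k])
  obtain ⟨u⟩ := hne i
  obtain ⟨w⟩ := hne j
  have hcard := card_replaceLayer_add_layerCount_le D i ⟨i, u⟩ ⟨j, w⟩
  rcases hD with ⟨hdom, hmin⟩ | ⟨hdom, hmin⟩
  · have := domNum_le_card (hdom.replaceLayer (x := ⟨i, u⟩) (y := ⟨j, w⟩) hij rfl rfl)
    omega
  · have := totalDomNum_le_card (hdom.replaceLayer (x := ⟨i, u⟩) (y := ⟨j, w⟩) hij rfl rfl)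
    omega
end

section
/- Let G be a connected graph on vertex set {1,...,n} with n ≥ 2 and Φ = (F_1,...,F_n) with |V(F_i)| ≥ 3 for all i. Then every minimum dominating set of G[Φ] is a restrained dominating set and an outer-connected dominating set, and conversely; i.e., the families of γ-sets, γ_r-sets and γ^{oc}-sets of G[Φ] coincide. The same strong equality holds among γ_t-sets, γ_{tr}-sets and γ_t^{oc}-sets of G[Φ]. -/
open scoped Classical

/-!
A minimum (total) dominating set `D` of `G[Φ]` cannot contain a whole layer `V(F i)`: replacing
that layer by one vertex of it and one vertex of a neighbouring layer `j` keeps `D` (totally)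
dominating and, as the layer has at least three vertices, makes it smaller. So `D` misses a
vertex `m i` of every layer. The vertices `m i` span a copy of `G` outside `D`, and every vertex
outside `D` is adjacent to some `m j`, so the complement of `D` is connected and has no isolated
vertices. Hence minimum (total) dominating sets are restrained and outer-connected, which forces
the three minimum cardinalities, and then the three families of minimum sets, to agree.
-/

section Minimum

variable {α : Type*}

/-- `domNum H`, `restrainedDomNum H`, … are `minCard` of the corresponding predicate. -/
noncomputable def minCard (P : Finset α → Prop) : ℕ :=
  sInf {k | ∃ D : Finset α, P D ∧ D.card = k}

def IsMinimum (P : Finset α → Prop) (D : Finset α) : Prop :=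
  P D ∧ D.card = minCard P

variable {P R : Finset α → Prop}

theorem minCard_le {D : Finset α} (hD : P D) : minCard P ≤ D.card :=
  Nat.sInf_le ⟨D, hD, rfl⟩

theorem exists_isMinimum {D : Finset α} (hD : P D) : ∃ D₀, IsMinimum P D₀ :=
  Nat.sInf_mem (⟨D.card, D, hD, rfl⟩ : {k | ∃ D : Finset α, P D ∧ D.card = k}.Nonempty)

theorem IsMinimum.not_lt {D D' : Finset α} (hD : IsMinimum P D) (hD' : P D') :
    ¬ D'.card < D.card :=
  hD.2 ▸ (minCard_le hD').not_gt

theorem isMinimum_iff_isMinimum_and (h : ∀ D, IsMinimum P D → R D) (D : Finset α) :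
    IsMinimum P D ↔ IsMinimum (fun D => P D ∧ R D) D := by
  constructor
  · intro hD
    refine ⟨⟨hD.1, h D hD⟩, le_antisymm ?_ (minCard_le ⟨hD.1, h D hD⟩)⟩
    obtain ⟨D₀, ⟨hPD₀, _⟩, hD₀⟩ := exists_isMinimum (P := fun D => P D ∧ R D) ⟨hD.1, h D hD⟩
    exact hD.2 ▸ hD₀ ▸ minCard_le hPD₀
  · rintro ⟨⟨hPD, _⟩, hcard⟩
    obtain ⟨D₀, hD₀⟩ := exists_isMinimum hPD
    refine ⟨hPD, le_antisymm ?_ (minCard_le hPD)⟩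
    exact hcard ▸ hD₀.2 ▸ minCard_le ⟨hD₀.1, h D₀ hD₀⟩

end Minimum

section GLP

variable {n : ℕ} {G : SimpleGraph (Fin n)} {V : Fin n → Type*} {F : ∀ i, SimpleGraph (V i)}

theorem GLP_adj_of_adj {i j : Fin n} (hij : G.Adj i j) (x : V i) (y : V j) :
    (GLP G F).Adj ⟨i, x⟩ ⟨j, y⟩ :=
  Or.inl ⟨hij.ne, hij⟩

theorem GLP_adj_fst {u v : Σ i, V i} (h : (GLP G F).Adj u v) : u.1 = v.1 ∨ G.Adj u.1 v.1 := by
  rcases h with ⟨_, h⟩ | ⟨h, _⟩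
  exacts [Or.inr h, Or.inl h]

noncomputable def layerSwap (D : Finset (Σ i, V i)) {i j : Fin n} (a : V i) (c : V j) :
    Finset (Σ i, V i) :=
  insert ⟨i, a⟩ (insert ⟨j, c⟩ (D.filter (·.1 ≠ i)))

section LayerSwap

variable {D : Finset (Σ i, V i)} {i j : Fin n} (a : V i) (c : V j)

theorem card_layerSwap_lt [Fintype (V i)] (hV : 3 ≤ Fintype.card (V i))
    (hlayer : ∀ x : V i, ⟨i, x⟩ ∈ D) : (layerSwap D a c).card < D.card := by
  have hfilter : 3 ≤ (D.filter (·.1 = i)).card := by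
    calc 3 ≤ Fintype.card (V i) := hV
      _ = (Finset.univ.map (Function.Embedding.sigmaMk (β := V) i)).card := by simp
      _ ≤ _ := Finset.card_le_card fun x hx => by
        obtain ⟨y, -, rfl⟩ := Finset.mem_map.mp hx
        exact Finset.mem_filter.mpr ⟨hlayer y, rfl⟩
  have hsplit : (D.filter (·.1 = i)).card + (D.filter (·.1 ≠ i)).card = D.card :=
    Finset.card_filter_add_card_filter_not _
  have hswap : (layerSwap D a c).card ≤ (D.filter (·.1 ≠ i)).card + 2 :=
    (Finset.card_insert_le _ _).trans (Nat.succ_le_succ (Finset.card_insert_le _ _))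
  omega

theorem exists_adj_mem_layerSwap (hij : G.Adj i j) {v : Σ i, V i}
    (hv : ∃ u ∈ D, (GLP G F).Adj u v) : ∃ u ∈ layerSwap D a c, (GLP G F).Adj u v := by
  obtain ⟨k, b⟩ := v
  by_cases hk : k = i
  · subst hk
    exact ⟨⟨j, c⟩, by simp [layerSwap], GLP_adj_of_adj hij.symm c b⟩
  by_cases hik : G.Adj i k
  · exact ⟨⟨i, a⟩, by simp [layerSwap], GLP_adj_of_adj hik a b⟩
  obtain ⟨u, hu, huv⟩ := hv
  have hui : u.1 ≠ i := by
    rintro rfl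
    rcases GLP_adj_fst huv with h | h
    exacts [hk h.symm, hik h]
  exact ⟨u, by simp [layerSwap, hu, hui], huv⟩

theorem isTotalDominatingSet_layerSwap (hij : G.Adj i j)
    (hD : isTotalDominatingSet (GLP G F) D) :
    isTotalDominatingSet (GLP G F) (layerSwap D a c) :=
  fun v => exists_adj_mem_layerSwap a c hij (hD v)

theorem isDominatingSet_layerSwap (hij : G.Adj i j) (hD : isDominatingSet (GLP G F) D) :
    isDominatingSet (GLP G F) (layerSwap D a c) := by
  intro v
  rcases hD v with hv | hv
  · by_cases hvi : v.1 = i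
    · obtain ⟨k, b⟩ := v
      subst hvi
      exact Or.inr ⟨⟨j, c⟩, by simp [layerSwap], GLP_adj_of_adj hij.symm c b⟩
    · exact Or.inl (by simp [layerSwap, hv, hvi])
  · exact Or.inr (exists_adj_mem_layerSwap a c hij hv)

end LayerSwap

variable [Nontrivial (Fin n)]

theorem exists_notMem_layer_of_isMinimum (hG : G.Preconnected) [∀ i, Fintype (V i)]
    (hV : ∀ i, 3 ≤ Fintype.card (V i)) {P : Finset (Σ i, V i) → Prop}
    (hP : ∀ (D : Finset (Σ i, V i)) (i j : Fin n) (a : V i) (c : V j),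
      G.Adj i j → P D → P (layerSwap D a c))
    {D : Finset (Σ i, V i)} (hD : IsMinimum P D) (i : Fin n) : ∃ x : V i, ⟨i, x⟩ ∉ D := by
  by_contra! hlayer
  obtain ⟨j, hij⟩ := hG.exists_adj_of_nontrivial i
  obtain ⟨a⟩ : Nonempty (V i) := Fintype.card_pos_iff.mp (by linarith [hV i])
  obtain ⟨c⟩ : Nonempty (V j) := Fintype.card_pos_iff.mp (by linarith [hV j])
  exact hD.not_lt (hP D i j a c hij hD.1) (card_layerSwap_lt a c (hV i) hlayer)

variable {D : Finset (Σ i, V i)}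

theorem exists_adj_notMem_of_forall_exists_notMem (hG : G.Preconnected)
    (hD : ∀ i, ∃ x : V i, ⟨i, x⟩ ∉ D) (v : Σ i, V i) :
    ∃ u ∉ D, (GLP G F).Adj u v := by
  obtain ⟨j, hij⟩ := hG.exists_adj_of_nontrivial v.1
  obtain ⟨z, hz⟩ := hD j
  exact ⟨⟨j, z⟩, hz, GLP_adj_of_adj hij.symm z v.2⟩

theorem connected_induce_compl_of_forall_exists_notMem (hG : G.Preconnected)
    (hD : ∀ i, ∃ x : V i, ⟨i, x⟩ ∉ D) :
    ((GLP G F).induce ((↑D : Set (Σ i, V i))ᶜ)).Connected := by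
  choose m hm using hD
  let f : G →g (GLP G F).induce ((↑D : Set (Σ i, V i))ᶜ) :=
    { toFun i := ⟨⟨i, m i⟩, hm i⟩
      map_rel' hij := GLP_adj_of_adj hij _ _ }
  have hnear (w : ((↑D : Set (Σ i, V i))ᶜ : Set _)) : ∃ j, ((GLP G F).induce _).Adj w (f j) := by
    obtain ⟨j, hij⟩ := hG.exists_adj_of_nontrivial w.1.1
    exact ⟨j, GLP_adj_of_adj hij w.1.2 (m j)⟩
  rw [SimpleGraph.connected_iff]
  refine ⟨fun u w => ?_, ⟨f (Classical.arbitrary _)⟩⟩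
  obtain ⟨j, hj⟩ := hnear u
  obtain ⟨k, hk⟩ := hnear w
  exact hj.reachable.trans (((hG j k).map f).trans hk.reachable.symm)

end GLP

/-- If `|V(F i)| ≥ 3` for all `i`, then the families of `γ`-sets, `γ_r`-sets
and `γ^{oc}`-sets of `G[Φ]` coincide, and likewise the families of `γ_t`-sets,
`γ_{tr}`-sets and `γ_t^{oc}`-sets coincide (strong equality). -/
theorem stmt_11 {n : ℕ} (hn : 2 ≤ n) (G : SimpleGraph (Fin n)) (hG : G.Connected)
    (V : Fin n → Type) [∀ i, Fintype (V i)] (F : ∀ i, SimpleGraph (V i))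
    (hV : ∀ i, 3 ≤ Fintype.card (V i)) :
    (∀ D : Finset (Σ i, V i),
      (isDominatingSet (GLP G F) D ∧ D.card = domNum (GLP G F)) ↔
      (isRestrainedDominatingSet (GLP G F) D ∧
        D.card = restrainedDomNum (GLP G F))) ∧
    (∀ D : Finset (Σ i, V i),
      (isDominatingSet (GLP G F) D ∧ D.card = domNum (GLP G F)) ↔
      (isOuterConnectedDominatingSet (GLP G F) D ∧ D.card = ocDomNum (GLP G F))) ∧
    (∀ D : Finset (Σ i, V i),
      (isTotalDominatingSet (GLP G F) D ∧ D.card = totalDomNum (GLP G F)) ↔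
      (isTotalRestrainedDominatingSet (GLP G F) D ∧
        D.card = totalRestrainedDomNum (GLP G F))) ∧
    (∀ D : Finset (Σ i, V i),
      (isTotalDominatingSet (GLP G F) D ∧ D.card = totalDomNum (GLP G F)) ↔
      (isTotalOuterConnectedDominatingSet (GLP G F) D ∧
        D.card = totalOcDomNum (GLP G F))) := by
  have : Nontrivial (Fin n) := Fin.nontrivial_iff_two_le.mpr hn
  have hdom {D} (hD : IsMinimum (isDominatingSet (GLP G F)) D) :=
    exists_notMem_layer_of_isMinimum hG.preconnected hV
      (fun _ _ _ _ _ hij => isDominatingSet_layerSwap _ _ hij) hD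
  have htot {D} (hD : IsMinimum (isTotalDominatingSet (GLP G F)) D) :=
    exists_notMem_layer_of_isMinimum hG.preconnected hV
      (fun _ _ _ _ _ hij => isTotalDominatingSet_layerSwap _ _ hij) hD
  exact ⟨isMinimum_iff_isMinimum_and fun _ hD v _ =>
      exists_adj_notMem_of_forall_exists_notMem hG.preconnected (hdom hD) v,
    isMinimum_iff_isMinimum_and fun _ hD =>
      connected_induce_compl_of_forall_exists_notMem hG.preconnected (hdom hD),
    isMinimum_iff_isMinimum_and fun _ hD v _ =>
      exists_adj_notMem_of_forall_exists_notMem hG.preconnected (htot hD) v,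
    isMinimum_iff_isMinimum_and fun _ hD =>
      connected_induce_compl_of_forall_exists_notMem hG.preconnected (htot hD)⟩
end

section
/- Let G and F be graphs with |V(G)| ≥ 2, |V(F)| ≥ 2 and G connected. Then the lexicographic product G[F] is well γ_t-dominated if and only if either (i) G is complete and F is well γ_t-dominated with γ_t(F) = 2, or (ii) G is well γ_t-dominated and F has an isolated vertex. -/
open scoped Classical

/-- The standard lexicographic product `G[F]`. -/
def lexProd {α β : Type*} (G : SimpleGraph α) (F : SimpleGraph β) :
    SimpleGraph (α × β) where
  Adj x y := G.Adj x.1 y.1 ∨ (x.1 = y.1 ∧ F.Adj x.2 y.2)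
  symm := by
    constructor
    rintro ⟨g, f⟩ ⟨g', f'⟩ (h | ⟨h1, h2⟩)
    · exact Or.inl h.symm
    · exact Or.inr ⟨h1.symm, h2.symm⟩
  loopless := by
    constructor
    rintro ⟨g, f⟩ (h | ⟨_, h⟩)
    · exact G.irrefl h
    · exact F.irrefl h

/-!
Two families of minimal total dominating sets of `G[F]` drive the proof: `T × {f}` for `T`
minimal in `G`, and `I × T` for `I` a maximal independent set of `G` and `T` minimal in `F`.
The first shows that `G` inherits the property. If `F` has an isolated vertex `b`, no vertex
`(g, b)` is dominated inside its layer, so minimal total dominating sets of `G[F]` project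
injectively onto those of `G`. Otherwise, if `G` is not complete, an induced path `a b c` and a
maximal independent set `I ⊇ {a, c}` give `|I × T| ≥ 2|I|`, while `G` has a total dominating set
of size `< 2|I|`. If `G` is complete, comparing `{g} × T` with a pair taken from two layers
forces `|T| = 2`; conversely a minimal total dominating set of `K_n[F]` is such a pair or lies
in a single layer.
-/

open Finset

section TotalDomination

variable {V : Type*} {H : SimpleGraph V}

theorem isMinimalTotalDominatingSet_iff_minimal {D : Finset V} :
    isMinimalTotalDominatingSet H D ↔ Minimal (isTotalDominatingSet H) D :=
  minimal_iff_forall_lt.symm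

theorem wellTotalDominated_iff :
    WellTotalDominated H ↔ ∀ D₁ D₂ : Finset V, Minimal (isTotalDominatingSet H) D₁ →
      Minimal (isTotalDominatingSet H) D₂ → D₁.card = D₂.card := by
  simp only [WellTotalDominated, isMinimalTotalDominatingSet_iff_minimal]

theorem minimal_isTotalDominatingSet_iff {S : Finset V} :
    Minimal (isTotalDominatingSet H) S ↔
      isTotalDominatingSet H S ∧ ∀ x ∈ S, ∃ v, ∀ u ∈ S, H.Adj u v → u = x := by
  rw [minimal_iff_forall_lt]
  refine and_congr_right fun _ => ⟨fun h x hx => ?_, fun h T hTS hT => ?_⟩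
  · have hx' : ¬ isTotalDominatingSet H (S.erase x) := h (erase_ssubset hx)
    simp only [isTotalDominatingSet, not_forall, not_exists, not_and] at hx'
    obtain ⟨v, hv⟩ := hx'
    exact ⟨v, fun u hu huv => by_contra fun hux => hv u (mem_erase.2 ⟨hux, hu⟩) huv⟩
  · obtain ⟨x, hxS, hxT⟩ := exists_of_ssubset hTS
    obtain ⟨v, hv⟩ := h x hxS
    obtain ⟨u, huT, huv⟩ := hT v
    exact hxT (hv u (hTS.subset huT) huv ▸ huT)

theorem isTotalDominatingSet.two_le_card [Nonempty V] {S : Finset V}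
    (h : isTotalDominatingSet H S) : 2 ≤ S.card := by
  obtain ⟨u, hu, -⟩ := h (Classical.arbitrary V)
  obtain ⟨w, hw, hwu⟩ := h u
  exact one_lt_card.2 ⟨u, hu, w, hw, hwu.ne'⟩

theorem minimal_isTotalDominatingSet_of_card_eq_two [Nonempty V] {D : Finset V}
    (hD : isTotalDominatingSet H D) (hD2 : D.card = 2) : Minimal (isTotalDominatingSet H) D :=
  minimal_iff_forall_lt.2 ⟨hD, fun _ hTD hT => (hT.two_le_card.trans_lt (card_lt_card hTD)).ne' hD2⟩

theorem totalDomNum_eq_two_iff [Nonempty V] :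
    totalDomNum H = 2 ↔ ∃ D : Finset V, isTotalDominatingSet H D ∧ D.card = 2 := by
  constructor
  · intro h
    have hne : {k | ∃ D : Finset V, isTotalDominatingSet H D ∧ D.card = k}.Nonempty := by
      by_contra hempty
      rw [Set.not_nonempty_iff_eq_empty] at hempty
      rw [totalDomNum, hempty, Nat.sInf_empty] at h
      omega
    obtain ⟨D, hD, hDk⟩ := Nat.sInf_mem hne
    exact ⟨D, hD, hDk.trans h⟩
  · rintro ⟨D, hD, hD2⟩
    refine le_antisymm (hD2 ▸ Nat.sInf_le ⟨D, hD, rfl⟩) (le_csInf ⟨D.card, D, hD, rfl⟩ ?_)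
    rintro k ⟨T, hT, rfl⟩
    exact hT.two_le_card

theorem isDominatingSet_of_maximal {I : Finset V} (hI : Maximal (isIndependentSet H) I) :
    isDominatingSet H I := by
  intro v
  by_contra! hv
  have hins : isIndependentSet H (insert v I) := by
    intro x hx y hy
    rcases mem_insert.1 hx with rfl | hxI <;> rcases mem_insert.1 hy with rfl | hyI
    · exact H.loopless.irrefl _
    · exact fun hxy => hv.2 y hyI hxy.symm
    · exact hv.2 x hxI
    · exact hI.prop x hxI y hyI
  exact hv.1 (hI.2 hins (subset_insert v I) (mem_insert_self v I))

/-- Add `b` and one neighbour of each vertex of `I` other than `a` and `c`. -/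
theorem isDominatingSet.exists_isTotalDominatingSet_card_lt {I : Finset V}
    (hI : isDominatingSet H I) (hnbr : ∀ v, ∃ u, H.Adj u v) {a b c : V} (ha : a ∈ I)
    (hc : c ∈ I) (hac : a ≠ c) (hba : H.Adj b a) (hbc : H.Adj b c) :
    ∃ D : Finset V, isTotalDominatingSet H D ∧ D.card < 2 * I.card := by
  choose n hn using hnbr
  refine ⟨I ∪ insert b ((I \ {a, c}).image n), fun v => ?_, ?_⟩
  · rcases hI v with hv | ⟨u, hu, huv⟩
    · by_cases hvac : v = a ∨ v = c
      · exact ⟨b, by simp, by rcases hvac with rfl | rfl <;> assumption⟩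
      · refine ⟨n v, mem_union_right _ (mem_insert_of_mem (mem_image_of_mem n ?_)), hn v⟩
        simp only [mem_sdiff, mem_insert, mem_singleton]
        exact ⟨hv, hvac⟩
    · exact ⟨u, mem_union_left _ hu, huv⟩
  · have hsub : ({a, c} : Finset V) ⊆ I := insert_subset ha (singleton_subset_iff.2 hc)
    have hI2 : 2 ≤ I.card := card_pair hac ▸ card_le_card hsub
    calc (I ∪ insert b ((I \ {a, c}).image n)).card
        ≤ I.card + ((I \ {a, c}).card + 1) := by
          grw [card_union_le, card_insert_le, card_image_le]
      _ = I.card + (I.card - 2 + 1) := by rw [card_sdiff_of_subset hsub, card_pair hac]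
      _ < 2 * I.card := by omega

end TotalDomination

theorem Minimal.image_of_forall_subset {X Y : Type*} {P : Finset X → Prop}
    {Q : Finset Y → Prop} {π : X → Y} {S : Finset X} (hS : Minimal P S)
    (hPQ : ∀ T ⊆ S, P T ↔ Q (T.image π)) :
    Minimal Q (S.image π) ∧ (S.image π).card = S.card := by
  have hinj : Set.InjOn π S := by
    intro x hx y hy hxy
    by_contra hne
    have himg : (S.erase y).image π = S.image π := by
      refine (image_subset_image (erase_subset y S)).antisymm fun p hp => ?_
      obtain ⟨z, hz, rfl⟩ := mem_image.1 hp
      by_cases hzy : z = y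
      · exact mem_image.2 ⟨x, mem_erase.2 ⟨hne, hx⟩, by rw [hxy, hzy]⟩
      · exact mem_image_of_mem π (mem_erase.2 ⟨hzy, hz⟩)
    refine hS.not_prop_of_lt (erase_ssubset (s := S) hy) ?_
    rw [hPQ _ (erase_subset y S), himg, ← hPQ S subset_rfl]
    exact hS.prop
  refine ⟨minimal_iff_forall_lt.2 ⟨(hPQ S subset_rfl).1 hS.prop, fun D hD hQ => ?_⟩,
    card_image_of_injOn hinj⟩
  have himg : (S.filter (π · ∈ D)).image π = D := by
    refine subset_antisymm (fun p hp => ?_) fun p hp => ?_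
    · obtain ⟨z, hz, rfl⟩ := mem_image.1 hp
      exact (mem_filter.1 hz).2
    · obtain ⟨z, hz, rfl⟩ := mem_image.1 (hD.le hp)
      exact mem_image_of_mem π (mem_filter.2 ⟨hz, hp⟩)
  have hlt : S.filter (π · ∈ D) < S := by
    refine (filter_subset _ S).ssubset_of_ne fun he => ?_
    obtain ⟨p, hpS, hpD⟩ := exists_of_ssubset hD
    obtain ⟨z, hz, rfl⟩ := mem_image.1 hpS
    rw [← he] at hz
    exact hpD (mem_filter.1 hz).2
  exact hS.not_prop_of_lt hlt ((hPQ _ (filter_subset _ S)).2 (by rw [himg]; exact hQ))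

theorem SimpleGraph.Connected.exists_adj_adj_not_adj_ne {V : Type*} {G : SimpleGraph V}
    (hG : G.Connected) (hne : G ≠ ⊤) :
    ∃ a b c : V, G.Adj a b ∧ G.Adj b c ∧ ¬ G.Adj a c ∧ a ≠ c := by
  obtain ⟨x, y, hxy, hnadj⟩ := ne_top_iff_exists_not_adj.1 hne
  obtain ⟨p, hp⟩ := hG.exists_path_of_dist x y
  exact p.exists_adj_adj_not_adj_ne hp.2 (hG.one_lt_dist_of_ne_of_not_adj hxy hnadj)

section LexProd

variable {α β : Type*} {G : SimpleGraph α} {F : SimpleGraph β}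

theorem minimal_lexProd_product_singleton {T : Finset α}
    (hT : Minimal (isTotalDominatingSet G) T) (f₀ : β) :
    Minimal (isTotalDominatingSet (lexProd G F)) (T ×ˢ {f₀}) := by
  rw [minimal_isTotalDominatingSet_iff] at hT ⊢
  refine ⟨fun x => ?_, fun x hx => ?_⟩
  · obtain ⟨t, ht, htx⟩ := hT.1 x.1
    exact ⟨(t, f₀), mk_mem_product ht (mem_singleton_self f₀), Or.inl htx⟩
  · obtain ⟨hx1, hx2⟩ := mem_product.1 hx
    obtain ⟨v, hv⟩ := hT.2 x.1 hx1
    refine ⟨(v, f₀), fun u hu huv => ?_⟩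
    obtain ⟨hu1, hu2⟩ := mem_product.1 hu
    rw [mem_singleton] at hx2 hu2
    rcases huv with huv | ⟨-, huv⟩
    · exact Prod.ext (hv u.1 hu1 huv) (hu2.trans hx2.symm)
    · exact (F.loopless.irrefl f₀ (hu2 ▸ huv)).elim

theorem minimal_lexProd_product {I : Finset α} {T : Finset β} (hI : isIndependentSet G I)
    (hId : isDominatingSet G I) (hT : Minimal (isTotalDominatingSet F) T) :
    Minimal (isTotalDominatingSet (lexProd G F)) (I ×ˢ T) := by
  rw [minimal_isTotalDominatingSet_iff] at hT ⊢
  refine ⟨fun x => ?_, fun x hx => ?_⟩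
  · obtain ⟨t, ht, htx⟩ := hT.1 x.2
    rcases hId x.1 with hx | ⟨u, hu, hux⟩
    · exact ⟨(x.1, t), mk_mem_product hx ht, Or.inr ⟨rfl, htx⟩⟩
    · exact ⟨(u, t), mk_mem_product hu ht, Or.inl hux⟩
  · obtain ⟨hx1, hx2⟩ := mem_product.1 hx
    obtain ⟨w, hw⟩ := hT.2 x.2 hx2
    refine ⟨(x.1, w), fun u hu huw => ?_⟩
    obtain ⟨hu1, hu2⟩ := mem_product.1 hu
    rcases huw with huw | ⟨h1, huw⟩
    · exact (hI u.1 hu1 x.1 hx1 huw).elim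
    · exact Prod.ext h1 (hw u.2 hu2 huw)

theorem lexProd_isTotalDominatingSet_iff_of_isolated {b₀ : β} (hb₀ : ∀ b, ¬ F.Adj b₀ b)
    {S : Finset (α × β)} :
    isTotalDominatingSet (lexProd G F) S ↔ isTotalDominatingSet G (S.image Prod.fst) := by
  constructor
  · intro h g
    obtain ⟨u, hu, hug⟩ := h (g, b₀)
    rcases hug with hug | ⟨-, hub⟩
    · exact ⟨u.1, mem_image_of_mem _ hu, hug⟩
    · exact (hb₀ u.2 hub.symm).elim
  · intro h x
    obtain ⟨g, hg, hgx⟩ := h x.1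
    obtain ⟨u, hu, rfl⟩ := mem_image.1 hg
    exact ⟨u, hu, Or.inl hgx⟩

theorem lexProd_top_isTotalDominatingSet_iff_of_fst_eq [Nonempty β] {g₀ : α}
    {S : Finset (α × β)} (hS : ∀ x ∈ S, x.1 = g₀) :
    isTotalDominatingSet (lexProd ⊤ F) S ↔ isTotalDominatingSet F (S.image Prod.snd) := by
  constructor
  · intro h f
    obtain ⟨u, hu, hug | ⟨-, huf⟩⟩ := h (g₀, f)
    · exact ((SimpleGraph.top_adj _ _).1 hug (hS u hu)).elim
    · exact ⟨u.2, mem_image_of_mem _ hu, huf⟩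
  · intro h x
    obtain ⟨f, hf, hfx⟩ := h x.2
    obtain ⟨u, hu, rfl⟩ := mem_image.1 hf
    by_cases hx : x.1 = g₀
    · exact ⟨u, hu, Or.inr ⟨(hS u hu).trans hx.symm, hfx⟩⟩
    · exact ⟨u, hu, Or.inl ((SimpleGraph.top_adj _ _).2 ((hS u hu).trans_ne (Ne.symm hx)))⟩

theorem lexProd_top_isTotalDominatingSet_pair {x y : α × β} (hxy : x.1 ≠ y.1) :
    isTotalDominatingSet (lexProd (⊤ : SimpleGraph α) F) {x, y} := by
  intro z
  by_cases hz : x.1 = z.1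
  · exact ⟨y, by simp, Or.inl ((SimpleGraph.top_adj _ _).2 fun h => hxy (hz.trans h.symm))⟩
  · exact ⟨x, by simp, Or.inl ((SimpleGraph.top_adj _ _).2 hz)⟩

theorem WellTotalDominated.of_lexProd [Nonempty β] (hW : WellTotalDominated (lexProd G F)) :
    WellTotalDominated G := by
  rw [wellTotalDominated_iff] at hW ⊢
  intro T₁ T₂ h₁ h₂
  obtain ⟨f₀⟩ := ‹Nonempty β›
  simpa using hW _ _ (minimal_lexProd_product_singleton (F := F) h₁ f₀)
    (minimal_lexProd_product_singleton h₂ f₀)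

theorem wellTotalDominated_lexProd_of_isolated {b₀ : β} (hb₀ : ∀ b, ¬ F.Adj b₀ b)
    (hWG : WellTotalDominated G) : WellTotalDominated (lexProd G F) := by
  rw [wellTotalDominated_iff] at hWG ⊢
  intro S₁ S₂ h₁ h₂
  have hproj := fun {S} (hS : Minimal (isTotalDominatingSet (lexProd G F)) S) =>
    hS.image_of_forall_subset fun _ _ => lexProd_isTotalDominatingSet_iff_of_isolated hb₀
  rw [← (hproj h₁).2, ← (hproj h₂).2]
  exact hWG _ _ (hproj h₁).1 (hproj h₂).1

theorem card_eq_two_of_minimal_lexProd_top [Nonempty α] [Nonempty β]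
    (hWF : WellTotalDominated F) {D : Finset β} (hD : isTotalDominatingSet F D) (hD2 : D.card = 2)
    {S : Finset (α × β)} (hS : Minimal (isTotalDominatingSet (lexProd ⊤ F)) S) : S.card = 2 := by
  by_cases h : ∃ x ∈ S, ∃ y ∈ S, x.1 ≠ y.1
  · obtain ⟨x, hx, y, hy, hxy⟩ := h
    have hpair := hS.eq_of_le (lexProd_top_isTotalDominatingSet_pair hxy)
      (insert_subset hx (singleton_subset_iff.2 hy))
    rw [← hpair, card_pair fun h => hxy (congrArg Prod.fst h)]
  · push Not at h
    obtain ⟨x₀, hx₀, -⟩ := hS.prop (Classical.arbitrary (α × β))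
    have hproj := hS.image_of_forall_subset fun T hT =>
      lexProd_top_isTotalDominatingSet_iff_of_fst_eq fun x hx => h x (hT hx) x₀ hx₀
    rw [← hproj.2, ← hD2]
    exact (wellTotalDominated_iff.1 hWF) _ _ hproj.1
      (minimal_isTotalDominatingSet_of_card_eq_two hD hD2)

theorem wellTotalDominated_lexProd_top [Nonempty α] [Nonempty β] (hWF : WellTotalDominated F)
    (hD : ∃ D : Finset β, isTotalDominatingSet F D ∧ D.card = 2) :
    WellTotalDominated (lexProd (⊤ : SimpleGraph α) F) := by
  obtain ⟨D, hD, hD2⟩ := hD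
  intro S₁ S₂ h₁ h₂
  rw [isMinimalTotalDominatingSet_iff_minimal] at h₁ h₂
  rw [card_eq_two_of_minimal_lexProd_top hWF hD hD2 h₁,
    card_eq_two_of_minimal_lexProd_top hWF hD hD2 h₂]

theorem card_eq_two_of_wellTotalDominated_lexProd_top [Nontrivial α] [Nonempty β]
    (hW : WellTotalDominated (lexProd (⊤ : SimpleGraph α) F)) {T : Finset β}
    (hT : Minimal (isTotalDominatingSet F) T) : T.card = 2 := by
  obtain ⟨g₁, g₂, hg⟩ := exists_pair_ne α
  obtain ⟨f⟩ := ‹Nonempty β›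
  have hsingle : Minimal (isTotalDominatingSet (lexProd ⊤ F)) ({g₁} ×ˢ T) := by
    refine minimal_lexProd_product (fun u hu v hv => ?_) (fun g => ?_) hT
    · rw [mem_singleton] at hu hv
      simp [hu, hv]
    · by_cases hg₁ : g = g₁
      · exact Or.inl (mem_singleton.2 hg₁)
      · exact Or.inr ⟨g₁, mem_singleton_self g₁, (SimpleGraph.top_adj _ _).2 (Ne.symm hg₁)⟩
  have hcard : ({(g₁, f), (g₂, f)} : Finset (α × β)).card = 2 :=
    card_pair fun h => hg (Prod.ext_iff.1 h).1
  have hpair := minimal_isTotalDominatingSet_of_card_eq_two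
    (lexProd_top_isTotalDominatingSet_pair (F := F) (x := (g₁, f)) (y := (g₂, f)) hg) hcard
  simpa [hcard] using wellTotalDominated_iff.1 hW _ _ hsingle hpair

theorem eq_top_of_wellTotalDominated_lexProd [Finite α] [Nontrivial α] [Nonempty β]
    (hG : G.Connected) {T : Finset β} (hT : Minimal (isTotalDominatingSet F) T)
    (hW : WellTotalDominated (lexProd G F)) : G = ⊤ := by
  by_contra hne
  obtain ⟨a, b, c, hab, hbc, hac, hne⟩ := hG.exists_adj_adj_not_adj_ne hne
  have hpair : isIndependentSet G {a, c} := by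
    intro u hu v hv
    simp only [mem_insert, mem_singleton] at hu hv
    rcases hu with rfl | rfl <;> rcases hv with rfl | rfl
    exacts [G.loopless.irrefl _, hac, fun h => hac h.symm, G.loopless.irrefl _]
  obtain ⟨I, hacI, hI⟩ := exists_maximal_ge_of_wellFoundedGT _ _ hpair
  obtain ⟨D, hD, hDcard⟩ := (isDominatingSet_of_maximal hI).exists_isTotalDominatingSet_card_lt
    (fun v => (hG.preconnected.exists_adj_of_nontrivial v).imp fun _ h => h.symm)
    (hacI (mem_insert_self a _)) (hacI (by simp)) hne hab.symm hbc
  obtain ⟨D', hD'D, hD'⟩ := exists_minimal_le_of_wellFoundedLT _ D hD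
  have hcard := wellTotalDominated_iff.1 hW _ _
    (minimal_lexProd_product hI.prop (isDominatingSet_of_maximal hI) hT)
    (minimal_lexProd_product_singleton hD' (Classical.arbitrary β))
  rw [card_product, card_product, card_singleton, mul_one] at hcard
  have hIT : I.card * 2 ≤ I.card * T.card := Nat.mul_le_mul_left I.card hT.prop.two_le_card
  have hD'le : D'.card ≤ D.card := card_le_card hD'D
  omega

end LexProd

/-- `G[F]` is well `γ_t`-dominated iff either `G` is complete and `F` is well
`γ_t`-dominated with `γ_t(F) = 2`, or `G` is well `γ_t`-dominated and `F` has
an isolated vertex. -/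
theorem stmt_18 {α β : Type} [Fintype α] [Fintype β]
    (G : SimpleGraph α) (F : SimpleGraph β)
    (hα : 2 ≤ Fintype.card α) (hβ : 2 ≤ Fintype.card β) (hG : G.Connected) :
    WellTotalDominated (lexProd G F) ↔
      ((G = ⊤ ∧ WellTotalDominated F ∧ totalDomNum F = 2) ∨
       (WellTotalDominated G ∧ ∃ b : β, ∀ b' : β, ¬ F.Adj b b')) := by
  have : Nontrivial α := Fintype.one_lt_card_iff_nontrivial.1 hα
  have : Nonempty β := Fintype.card_pos_iff.1 (by omega)
  constructor
  · intro hW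
    by_cases hiso : ∃ b : β, ∀ b' : β, ¬ F.Adj b b'
    · exact Or.inr ⟨hW.of_lexProd, hiso⟩
    push Not at hiso
    obtain ⟨T, -, hT⟩ := exists_minimal_le_of_wellFoundedLT (isTotalDominatingSet F) univ
      fun f => (hiso f).imp fun b hb => ⟨mem_univ b, hb.symm⟩
    obtain rfl := eq_top_of_wellTotalDominated_lexProd hG hT hW
    have hcard : ∀ {T : Finset β}, Minimal (isTotalDominatingSet F) T → T.card = 2 :=
      card_eq_two_of_wellTotalDominated_lexProd_top hW
    refine Or.inl ⟨rfl, fun D₁ D₂ h₁ h₂ => ?_, totalDomNum_eq_two_iff.2 ⟨T, hT.prop, hcard hT⟩⟩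
    rw [isMinimalTotalDominatingSet_iff_minimal] at h₁ h₂
    rw [hcard h₁, hcard h₂]
  · rintro (⟨rfl, hWF, hγ⟩ | ⟨hWG, b₀, hb₀⟩)
    · exact wellTotalDominated_lexProd_top hWF (totalDomNum_eq_two_iff.1 hγ)
    · exact wellTotalDominated_lexProd_of_isolated hb₀ hWG
end
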